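/- Parallel lifting of a binary operation respects weak bisimilarity: if ∗ is a binary operation on X and ⊛ denotes its parallel lifting to DX, then x ≈_R x' and y ≈_R y' imply (x ⊛ y) ≈_{R∗} (x' ⊛ y'), where R∗ relates a∗b to a'∗b' whenever R(a,a') and R(b,b'). -/

import Mathlib

/-- The coinductive delay monad: `D X` is the final coalgebra of `Y ↦ X ⊕ Y`.
Concretely, an element of `D X` either diverges (`none`), or is of the form
`step^n (now x)`, represented as `some (n, x)`. -/
def Delay (X : Type) : Type := Option (ℕ × X)

namespace Delay

/-- `now : X → D X`. -/
def now {X : Type} (x : X) : Delay X := some (0, x)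

/-- `step : D X → D X`. -/
def step {X : Type} : Delay X → Delay X
  | none => none
  | some (n, x) => some (n + 1, x)

/-- The divergent computation, `fix step`. -/
def diverge {X : Type} : Delay X := none

/-- Functorial action of `D`. -/
def map {X Y : Type} (f : X → Y) : Delay X → Delay Y
  | none => none
  | some (n, x) => some (n, f x)

/-- Monad multiplication `μ : D(D X) → D X`, satisfying `μ (now d) = d` and
`μ (step d) = step (μ d)`. -/
def mu {X : Type} : Delay (Delay X) → Delay X
  | none => none
  | some (_, none) => none
  | some (n, some (m, x)) => some (n + m, x)

end Delay

/-- Weak bisimilarity up to a relation `R`, relating computations that differ only by a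
finite number of steps: `now x ≈ y` iff `y = step^n (now y')` with `R x y'` (and
symmetrically), while `step x ≈ step y` iff `x ≈ y`; divergence is related only to
divergence. -/
def Delay.wbisim {X Y : Type} (R : X → Y → Prop) : Delay X → Delay Y → Prop :=
  fun a b =>
    match a, b with
    | none, none => True
    | some (_, x), some (_, y) => R x y
    | _, _ => False

/-- Parallel lifting of a binary operation `∗` on `X` to the coinductive delay monad:
steps of the arguments are executed in parallel. -/
def parLift {X : Type} (f : X → X → X) : Delay X → Delay X → Delay X
  | some (n, x), some (m, y) => some (max n m, f x y)
  | _, _ => none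

/-- Only convergence matters: `x ⊛ y` converges iff both `x` and `y` do, to the product of their
values, and weak bisimilarity forgets the step counts. -/
theorem Delay.wbisim_parLift {X : Type} {R S : X → X → Prop} {f g : X → X → X}
    (hfg : ∀ a a' b b', R a a' → R b b' → S (f a b) (g a' b')) {x x' y y' : Delay X}
    (hx : Delay.wbisim R x x') (hy : Delay.wbisim R y y') :
    Delay.wbisim S (parLift f x y) (parLift g x' y') :=
  match x, x', y, y', hx, hy with
  | some (_, a), some (_, a'), some (_, b), some (_, b'), hx, hy => hfg a a' b b' hx hy
  | none, none, _, _, _, _ => trivial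
  | some _, some _, none, none, _, _ => trivial
  | none, some _, _, _, hx, _ => hx.elim
  | some _, none, _, _, hx, _ => hx.elim
  | some _, some _, none, some _, _, hy => hy.elim
  | some _, some _, some _, none, _, hy => hy.elim

/-- Parallel lifting of a binary operation respects weak bisimilarity: if `x ≈_R x'` and
`y ≈_R y'` then `(x ⊛ y) ≈_{R∗} (x' ⊛ y')`, where `R∗` relates `a ∗ b` to `a' ∗ b'`
whenever `R a a'` and `R b b'`. -/
theorem parLift_respects_wbisim (X : Type) (f : X → X → X) (R : X → X → Prop) :
    let Rstar : X → X → Prop := fun u v =>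
      ∃ a b a' b', R a a' ∧ R b b' ∧ u = f a b ∧ v = f a' b'
    ∀ x x' y y' : Delay X,
      Delay.wbisim R x x' → Delay.wbisim R y y' →
        Delay.wbisim Rstar (parLift f x y) (parLift f x' y') := by
  intro Rstar x x' y y' hx hy
  exact Delay.wbisim_parLift (fun a a' b b' ha hb => ⟨a, b, a', b', ha, hb, rfl, rfl⟩) hx hy
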